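/- Let A be a finite-dimensional evolution algebra with natural basis B, and let m = asi(A) be the annihilator stabilizing index. Then rad(A) = span{e_i : i in λ_m(B)}, where λ_1(B) = {i : e_i^2 = 0} and λ_k(B) = {i : D^1(i) ⊆ λ_{k-1}(B)}. -/

import Mathlib

open Submodule

section EvolutionPreamble

/-- The set of `k`-th generation descendants of a vertex in a directed graph
given by an edge relation `E`; `Dk E 0 i = {i}`. -/
def Dk {V : Type*} (E : V → V → Prop) : ℕ → V → Set V
  | 0, i => {i}
  | n + 1, i => {k | ∃ j ∈ Dk E n i, E j k}

/-- A vertex is cyclic if there is a (possibly trivial) path from it to a vertex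
lying on a cycle. -/
def IsCyclicVertex {V : Type*} (E : V → V → Prop) (i : V) : Prop :=
  ∃ j, Relation.ReflTransGen E i j ∧ Relation.TransGen E j j

/-- Connectedness of a directed graph: every nontrivial partition of the
vertex set is crossed by an edge (in one direction or the other). -/
def GraphConnected {V : Type*} (E : V → V → Prop) : Prop :=
  ∀ s : Set V, s.Nonempty → sᶜ.Nonempty → ∃ x ∈ s, ∃ y ∈ sᶜ, E x y ∨ E y x

variable {K : Type*} [Field K] {A : Type*} [NonUnitalNonAssocRing A]
  [Module K A] [SMulCommClass K A A] [IsScalarTower K A A] {ι : Type*}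

/-- A basis is natural if distinct basis vectors multiply to zero. -/
def IsNaturalBasis (B : Module.Basis ι K A) : Prop := ∀ i j, i ≠ j → B i * B j = 0

/-- Edge relation of the directed graph `Γ(A,B)` associated to an evolution
algebra `A` with natural basis `B`: `(i,k)` is an edge iff the structure
constant `w_{ik}` is nonzero. -/
def edge (B : Module.Basis ι K A) (i k : ι) : Prop := B.repr (B i * B i) k ≠ 0

/-- First-generation descendants in `Γ(A,B)`. -/
def D1 (B : Module.Basis ι K A) (i : ι) : Set ι := {k | edge B i k}

/-- The increasing chain of index sets `λ_k(B)`: `λ_0 = ∅`,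
`λ_{k+1}(B) = {i : D¹(i) ⊆ λ_k(B)}`.  In particular
`λ_1(B) = {i : e_i² = 0}`. -/
def lam (B : Module.Basis ι K A) : ℕ → Set ι
  | 0 => ∅
  | n + 1 => {i | ∀ k, edge B i k → k ∈ lam B n}

/-- `I` is a (two-sided) ideal. -/
def IsIdeal (I : Submodule K A) : Prop := ∀ x ∈ I, ∀ a : A, x * a ∈ I ∧ a * x ∈ I

/-- The absorption property: `xA ⊆ I` implies `x ∈ I`. -/
def HasAbsorption (I : Submodule K A) : Prop := ∀ x : A, (∀ a : A, x * a ∈ I) → x ∈ I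

/-- The absorption radical: intersection of all ideals with the absorption property. -/
def rad (K : Type*) (A : Type*) [Field K] [NonUnitalNonAssocRing A]
    [Module K A] [SMulCommClass K A A] [IsScalarTower K A A] : Submodule K A :=
  sInf {I : Submodule K A | IsIdeal I ∧ HasAbsorption I}

lemma rad_isIdeal : IsIdeal (rad K A) := by
  intro x hx a
  rw [rad, Submodule.mem_sInf] at hx
  constructor <;>
    · rw [rad, Submodule.mem_sInf]
      intro I hI
      first
        | exact (hI.1 x (hx I hI) a).1
        | exact (hI.1 x (hx I hI) a).2

/-- The annihilator `ann(A) = {x : xA = Ax = 0}` as a submodule. -/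
def annSub (K : Type*) (A : Type*) [Field K] [NonUnitalNonAssocRing A]
    [Module K A] [SMulCommClass K A A] [IsScalarTower K A A] : Submodule K A where
  carrier := {x | ∀ a : A, x * a = 0 ∧ a * x = 0}
  add_mem' := by
    intro x y hx hy a
    constructor
    · rw [add_mul, (hx a).1, (hy a).1, add_zero]
    · rw [mul_add, (hx a).2, (hy a).2, add_zero]
  zero_mem' := by intro a; simp
  smul_mem' := by
    intro c x hx a
    constructor
    · rw [smul_mul_assoc, (hx a).1, smul_zero]
    · rw [mul_smul_comm, (hx a).2, smul_zero]

/-- The upper annihilating series: `ann⁰(A) = 0`,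
`annⁱ⁺¹(A) = {x : xA ∪ Ax ⊆ annⁱ(A)}`. -/
def annSeries (K : Type*) (A : Type*) [Field K] [NonUnitalNonAssocRing A]
    [Module K A] [SMulCommClass K A A] [IsScalarTower K A A] : ℕ → Submodule K A
  | 0 => ⊥
  | n + 1 =>
    { carrier := {x | ∀ a : A, x * a ∈ annSeries K A n ∧ a * x ∈ annSeries K A n}
      add_mem' := by
        intro x y hx hy a
        constructor
        · rw [add_mul]; exact add_mem (hx a).1 (hy a).1
        · rw [mul_add]; exact add_mem (hx a).2 (hy a).2
      zero_mem' := by intro a; simp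
      smul_mem' := by
        intro c x hx a
        constructor
        · rw [smul_mul_assoc]; exact smul_mem _ c (hx a).1
        · rw [mul_smul_comm]; exact smul_mem _ c (hx a).2 }

/-- The annihilator stabilizing index `asi(A)`. -/
noncomputable def asi (K : Type*) (A : Type*) [Field K] [NonUnitalNonAssocRing A]
    [Module K A] [SMulCommClass K A A] [IsScalarTower K A A] : ℕ :=
  sInf {q : ℕ | annSeries K A q = annSeries K A (q + 1)}

/-- Product of two submodules (span of pairwise products). -/
def smulSub (I J : Submodule K A) : Submodule K A :=
  Submodule.span K (Set.image2 (· * ·) (I : Set A) (J : Set A))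

/-- Powers of a subalgebra/ideal, with `N^{k} = Σ_{i+j=k, i,j ≥ 1} Nⁱ Nʲ`. -/
def npow (I : Submodule K A) : ℕ → Submodule K A
  | 0 => ⊥
  | 1 => I
  | n + 2 => ⨆ i : Fin (n + 1), smulSub (npow I (i.1 + 1)) (npow I (n + 1 - i.1))
  termination_by n => n
  decreasing_by
  · have := i.isLt; omega
  · have := i.isLt; omega

/-- `I` is an ideal of the subalgebra `N`. -/
def IsIdealIn (N I : Submodule K A) : Prop :=
  I ≤ N ∧ ∀ x ∈ I, ∀ a ∈ N, x * a ∈ I ∧ a * x ∈ I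

/-- The (sub)algebra `N` is decomposable: it is the direct sum of two nonzero
ideals of `N`. -/
def DecomposableIn (N : Submodule K A) : Prop :=
  ∃ I J : Submodule K A, IsIdealIn N I ∧ IsIdealIn N J ∧ I ≠ ⊥ ∧ J ≠ ⊥ ∧
    I ⊓ J = ⊥ ∧ I ⊔ J = N

/-- Multiplication inside an ideal `N` (an ideal is closed under products). -/
def subMul {N : Submodule K A} (hN : IsIdeal N) (x y : N) : N :=
  ⟨(x : A) * (y : A), (hN x x.2 y).1⟩

/-- The induced multiplication on the quotient `A ⧸ I` by an ideal `I`. -/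
def quotMul (I : Submodule K A) (hI : IsIdeal I) (x y : A ⧸ I) : A ⧸ I :=
  Quotient.liftOn₂ x y (fun a b => Submodule.Quotient.mk (a * b)) (by
    intro a b a' b' ha hb
    have ha' : a - a' ∈ I := (Submodule.quotientRel_def I).mp ha
    have hb' : b - b' ∈ I := (Submodule.quotientRel_def I).mp hb
    refine (Submodule.Quotient.eq I).mpr ?_
    have h : a * b - a' * b' = a * (b - b') + (a - a') * b' := by
      rw [mul_sub, sub_mul]; abel
    rw [h]
    exact add_mem (hI _ hb' a).2 (hI _ ha' b').1)

/-- Edge relation of the graph associated to the quotient evolution algebra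
`A ⧸ I` relative to a basis `C`. -/
def edgeQ {κ : Type*} (I : Submodule K A) (hI : IsIdeal I)
    (C : Module.Basis κ K (A ⧸ I)) (i k : κ) : Prop :=
  C.repr (quotMul I hI (C i) (C i)) k ≠ 0

end EvolutionPreamble

/-! Over a natural basis the product is `x * a = ∑ᵢ xᵢ aᵢ e_i²`, so `x A ⊆ span{e_k : k ∈ s}` says
exactly that every `i` in the support of `x` has all its first-generation descendants in `s`.
Induction on `n` then identifies `annⁿ(A)` with `span{e_i : i ∈ λ_n(B)}`, and for a commutative
finite-dimensional algebra the series stabilises at an ideal with the absorption property, which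
is therefore `rad(A)`. -/

section AnnihilatingSeries

variable {K : Type*} [Field K] {A : Type*} [NonUnitalNonAssocRing A]
  [Module K A] [SMulCommClass K A A] [IsScalarTower K A A]

lemma annSeries_le_succ (n : ℕ) : annSeries K A n ≤ annSeries K A (n + 1) := by
  induction n with
  | zero => exact bot_le
  | succ n ih => exact fun x hx a => ⟨ih (hx a).1, ih (hx a).2⟩

lemma annSeries_isIdeal (n : ℕ) : IsIdeal (annSeries K A n) := by
  intro x hx a
  cases n with
  | zero =>
    obtain rfl : x = 0 := (Submodule.mem_bot K).mp hx
    simp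
  | succ n => exact ⟨annSeries_le_succ n (hx a).1, annSeries_le_succ n (hx a).2⟩

lemma annSeries_le_rad (n : ℕ) : annSeries K A n ≤ rad K A := by
  induction n with
  | zero => exact bot_le
  | succ n ih =>
    intro x hx
    refine Submodule.mem_sInf.mpr fun I hI => hI.2 x fun a => ?_
    exact Submodule.mem_sInf.mp (ih (hx a).1) I hI

lemma exists_annSeries_eq_succ [FiniteDimensional K A] :
    ∃ q, annSeries K A q = annSeries K A (q + 1) := by
  by_contra! h
  have hrank : ∀ n, n ≤ Module.finrank K (annSeries K A n) := by
    intro n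
    induction n with
    | zero => exact Nat.zero_le _
    | succ n ih =>
      have := Submodule.finrank_lt_finrank_of_lt ((annSeries_le_succ n).lt_of_ne (h n))
      omega
  have := Submodule.finrank_le (annSeries K A (Module.finrank K A + 1))
  have := hrank (Module.finrank K A + 1)
  omega

lemma annSeries_asi_eq_succ [FiniteDimensional K A] :
    annSeries K A (asi K A) = annSeries K A (asi K A + 1) :=
  Nat.sInf_mem exists_annSeries_eq_succ

lemma rad_eq_annSeries_asi [FiniteDimensional K A] (hcomm : ∀ x y : A, x * y = y * x) :
    rad K A = annSeries K A (asi K A) := by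
  refine le_antisymm (sInf_le ⟨annSeries_isIdeal _, fun x hx => ?_⟩) (annSeries_le_rad _)
  rw [annSeries_asi_eq_succ]
  exact fun a => ⟨hx a, hcomm a x ▸ hx a⟩

end AnnihilatingSeries

namespace IsNaturalBasis

variable {K : Type*} [Field K] {A : Type*} [NonUnitalNonAssocRing A]
  [Module K A] [SMulCommClass K A A] [IsScalarTower K A A] {ι : Type*} [Fintype ι]
  {B : Module.Basis ι K A}

lemma mul_eq_sum (hB : IsNaturalBasis B) (x a : A) :
    x * a = ∑ i, (B.repr x i * B.repr a i) • (B i * B i) := by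
  conv_lhs => rw [← B.sum_repr x, ← B.sum_repr a, Finset.sum_mul_sum]
  refine Finset.sum_congr rfl fun i _ => ?_
  rw [Finset.sum_eq_single_of_mem i (Finset.mem_univ i) fun j _ hj => ?_]
  · rw [smul_mul_assoc, mul_smul_comm, smul_smul]
  · rw [smul_mul_assoc, mul_smul_comm, hB i j hj.symm, smul_zero, smul_zero]

lemma mul_comm (hB : IsNaturalBasis B) (x a : A) : x * a = a * x := by
  rw [hB.mul_eq_sum, hB.mul_eq_sum]
  exact Finset.sum_congr rfl fun i _ => by rw [_root_.mul_comm]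

lemma repr_mul (hB : IsNaturalBasis B) (x a : A) (k : ι) :
    B.repr (x * a) k = ∑ i, B.repr x i * B.repr a i * B.repr (B i * B i) k := by
  rw [hB.mul_eq_sum, map_sum, Finsupp.finsetSum_apply]
  simp only [map_smul, Finsupp.smul_apply, smul_eq_mul]

lemma repr_mul_basis (hB : IsNaturalBasis B) (x : A) (i k : ι) :
    B.repr (x * B i) k = B.repr x i * B.repr (B i * B i) k := by
  rw [hB.repr_mul, Finset.sum_eq_single_of_mem i (Finset.mem_univ i) fun j _ hj => ?_]
  · simp
  · simp [Finsupp.single_eq_of_ne hj]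

lemma forall_mul_mem_span_iff (hB : IsNaturalBasis B) (x : A) (s : Set ι) :
    (∀ a, x * a ∈ span K (B '' s)) ↔ ∀ i, B.repr x i ≠ 0 → D1 B i ⊆ s := by
  simp only [Module.Basis.mem_span_image, Set.subset_def,
    Finset.mem_coe, Finsupp.mem_support_iff]
  constructor
  · intro h i hi k hk
    exact h (B i) k (by rw [hB.repr_mul_basis]; exact mul_ne_zero hi hk)
  · intro h a k hk
    rw [hB.repr_mul] at hk
    obtain ⟨i, -, hi⟩ := Finset.exists_ne_zero_of_sum_ne_zero hk
    exact h i (left_ne_zero_of_mul (left_ne_zero_of_mul hi)) k (right_ne_zero_of_mul hi)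

lemma annSeries_eq_span_lam (hB : IsNaturalBasis B) (n : ℕ) :
    annSeries K A n = span K (B '' lam B n) := by
  induction n with
  | zero => simp [annSeries, lam]
  | succ n ih =>
    ext x
    have hx : x ∈ annSeries K A (n + 1) ↔ ∀ a, x * a ∈ span K (B '' lam B n) := by
      simp only [annSeries, Submodule.mem_mk, AddSubmonoid.mem_mk, AddSubsemigroup.mem_mk,
        Set.mem_ofPred_eq, ← ih, hB.mul_comm _ x, and_self]
    rw [hx, hB.forall_mul_mem_span_iff, Module.Basis.mem_span_image]
    simp only [Set.subset_def, Finset.mem_coe, Finsupp.mem_support_iff]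
    rfl

end IsNaturalBasis

/-- `rad(A) = span{e_i : i ∈ λ_m(B)}` where `m = asi(A)`. -/
theorem stmt5 {K : Type*} [Field K] {A : Type*} [NonUnitalNonAssocRing A]
    [Module K A] [SMulCommClass K A A] [IsScalarTower K A A]
    {ι : Type*} [Fintype ι] (B : Module.Basis ι K A) (hB : IsNaturalBasis B) :
    rad K A = Submodule.span K (B '' lam B (asi K A)) := by
  have : FiniteDimensional K A := Module.Finite.of_basis B
  rw [rad_eq_annSeries_asi hB.mul_comm, hB.annSeries_eq_span_lam]
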